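/- The bounding number 𝔟 is less than or equal to the reaping number 𝔯. -/

import Mathlib

open Set Filter Cardinal

/-- `a ⊆* b` : `a` is almost contained in `b` (mod finite). -/
def almostLE (a b : Set ℕ) : Prop := (a \ b).Finite

/-- `f <* g` : eventual domination mod finite. -/
def domLT (f g : ℕ → ℕ) : Prop := {k | g k ≤ f k}.Finite

/-- The bounding number 𝔟. -/
noncomputable def bNum : Cardinal :=
  sInf { c | ∃ F : Set (ℕ → ℕ), Cardinal.mk F = c ∧ ∀ g : ℕ → ℕ, ∃ f ∈ F, ¬ domLT f g }

/-- The dominating number 𝔡. -/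
noncomputable def dNum : Cardinal :=
  sInf { c | ∃ F : Set (ℕ → ℕ), Cardinal.mk F = c ∧ ∀ g : ℕ → ℕ, ∃ f ∈ F, domLT g f }

/-- `c` reaps the family `A`. -/
def Reaps (c : Set ℕ) (A : Set (Set ℕ)) : Prop :=
  ∀ a ∈ A, (a ∩ c).Infinite ∧ (a \ c).Infinite

/-- The reaping number 𝔯. -/
noncomputable def rNum : Cardinal :=
  sInf { c | ∃ A : Set (Set ℕ), Cardinal.mk A = c ∧ (∀ a ∈ A, a.Infinite) ∧
    ∀ d : Set ℕ, ¬ Reaps d A }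

/-- The splitting number 𝔰. -/
noncomputable def sNum : Cardinal :=
  sInf { c | ∃ A : Set (Set ℕ), Cardinal.mk A = c ∧ ∀ b : Set ℕ, b.Infinite →
    ∃ a ∈ A, (b ∩ a).Infinite ∧ (b \ a).Infinite }

/-- `next(a,k)`, the least element of `a` above `k`. -/
noncomputable def nxt (a : Set ℕ) (k : ℕ) : ℕ := sInf {n | n ∈ a ∧ k < n}

/-- ℕ*, the Stone–Čech remainder, realized as the space of free ultrafilters on ℕ. -/
abbrev NStar : Type := {x : Ultrafilter ℕ // (Filter.cofinite : Filter ℕ) ≤ ↑x}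

/-- For `a ⊆ ℕ`, the basic clopen set `a*` of free ultrafilters containing `a`. -/
def setStar (a : Set ℕ) : Set NStar := {x | a ∈ x.1}

/-- The ideal `I_A = { a ⊆ ℕ : a* ⊆ A }`. -/
def idealOf (A : Set NStar) : Set (Set ℕ) := {a | setStar a ⊆ A}

/-- `A` is almost clopen: the closure of an open set with a unique boundary point. -/
def AlmostClopen (A : Set NStar) : Prop :=
  (∃ U : Set NStar, IsOpen U ∧ A = closure U) ∧ ∃! x : NStar, x ∈ frontier A

/-- `x` is a tie-point as witnessed by the closed sets `A`, `B`. -/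
def TiePoint {X : Type*} [TopologicalSpace X] (x : X) (A B : Set X) : Prop :=
  IsClosed A ∧ IsClosed B ∧ A ∪ B = Set.univ ∧ A ∩ B = {x} ∧
    x ∈ closure (A \ {x}) ∧ x ∈ closure (B \ {x})

/-- An almost clopen set `A` is simple of type `κ`: `I_A` has a strictly ⊆*-increasing,
⊆*-cofinal chain of order type `κ`. -/
def SimpleType (A : Set NStar) (κ : Cardinal) : Prop :=
  ∃ a : Ordinal → Set ℕ,
    (∀ α, α < κ.ord → a α ∈ idealOf A) ∧
    (∀ α β, α < β → β < κ.ord → almostLE (a α) (a β) ∧ (a β \ a α).Infinite) ∧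
    (∀ c ∈ idealOf A, ∃ α, α < κ.ord ∧ almostLE c (a α))

/-- The family `A` converges to the ultrafilter `x`. -/
def Converges (A : Set (Set ℕ)) (x : Ultrafilter ℕ) : Prop :=
  ∀ U ∈ x, Cardinal.mk {a : Set ℕ // a ∈ A ∧ (a \ U).Infinite} < Cardinal.mk A

/-- `A` is hereditarily unreapable. -/
def HeredUnreapable (A : Set (Set ℕ)) : Prop :=
  ∀ B ⊆ A, (∃ c : Set ℕ, Reaps c B) → Cardinal.mk B < Cardinal.mk A

/-- `f <_x g` for an ultrafilter `x`. -/
def ultLT (x : Ultrafilter ℕ) (f g : ℕ → ℕ) : Prop := {n | f n < g n} ∈ x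

/-- A fixed `<*`-increasing `<*`-unbounded family `{f_ξ : ξ < 𝔟}` of strictly increasing
functions. -/
def UnbddChain (f : Ordinal → ℕ → ℕ) : Prop :=
  (∀ ξ, ξ < bNum.ord → StrictMono (f ξ)) ∧
  (∀ η ξ, η < ξ → ξ < bNum.ord → domLT (f η) (f ξ)) ∧
  (∀ g : ℕ → ℕ, ∃ ξ, ξ < bNum.ord ∧ ¬ domLT (f ξ) g)

/-- `x` is an almost `P_λ`-point. -/
def AlmostPPoint (x : Ultrafilter ℕ) (lam : Cardinal) : Prop :=
  ∀ F : Set (Set ℕ), (∀ U ∈ F, U ∈ x) → Cardinal.mk F < lam →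
    ∃ p : Set ℕ, p.Infinite ∧ ∀ U ∈ F, almostLE p U

/-!
If `A` is a family of infinite sets that cannot be reaped, the functions `nxt a` (`a ∈ A`)
form an unbounded family, so `𝔟 ≤ |A|`. Indeed, were they all dominated by `g`, choose
`K` strictly increasing with `g (K n) < K (n + 1)`. Then for every `a ∈ A` and all large `n`,
the point `nxt a (K n)` lies in `a ∩ [K n, K (n + 1))`, so the union of the even-indexed
intervals reaps `A`.
-/

lemma nxt_mem_and_lt {a : Set ℕ} (ha : a.Infinite) (k : ℕ) : nxt a k ∈ a ∧ k < nxt a k :=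
  Nat.sInf_mem (ha.exists_gt k)

lemma domLT_iff_eventually_lt {f g : ℕ → ℕ} : domLT f g ↔ ∀ᶠ k in atTop, f k < g k := by
  simp only [domLT, ← Nat.cofinite_eq_atTop, eventually_cofinite, not_lt]

lemma not_reaps_setOf_infinite (d : Set ℕ) : ¬ Reaps d {a | a.Infinite} := by
  intro hd
  by_cases hfin : d.Finite
  · simpa using (hd dᶜ hfin.infinite_compl).1
  · simpa using (hd d hfin).2

lemma Set.infinite_of_eventually_exists_ge {s : Set ℕ} {L : ℕ → ℕ}
    (hL : Tendsto L atTop atTop) (h : ∀ᶠ m in atTop, ∃ x ∈ s, L m ≤ x) : s.Infinite := by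
  refine Set.infinite_of_forall_exists_gt fun b => ?_
  obtain ⟨m, ⟨x, hxs, hLx⟩, hbL⟩ := (h.and (hL.eventually_gt_atTop b)).exists
  exact ⟨x, hxs, hbL.trans_le hLx⟩

lemma exists_strictMono_lt_succ (g : ℕ → ℕ) :
    ∃ K : ℕ → ℕ, StrictMono K ∧ ∀ n, g (K n) < K (n + 1) := by
  let K : ℕ → ℕ := fun n => (fun k => max (g k) k + 1)^[n] 0
  have hK : ∀ n, K (n + 1) = max (g (K n)) (K n) + 1 := fun n =>
    Function.iterate_succ_apply' _ n 0
  exact ⟨K, strictMono_nat_of_lt_succ fun n => by rw [hK]; omega,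
    fun n => by rw [hK]; omega⟩

def evenBlocks (K : ℕ → ℕ) : Set ℕ := ⋃ n, Ico (K (2 * n)) (K (2 * n + 1))

lemma notMem_evenBlocks {K : ℕ → ℕ} (hK : StrictMono K) {n x : ℕ}
    (hx : x ∈ Ico (K (2 * n + 1)) (K (2 * n + 2))) : x ∉ evenBlocks K := by
  rw [mem_Ico] at hx
  simp only [evenBlocks, mem_iUnion, mem_Ico, not_exists, not_and, not_lt]
  intro j hj
  rcases le_or_gt j n with hjn | hjn
  · exact (hK.monotone (by omega : 2 * j + 1 ≤ 2 * n + 1)).trans hx.1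
  · have := hK.monotone (by omega : 2 * n + 2 ≤ 2 * j)
    omega

lemma reaps_evenBlocks {K : ℕ → ℕ} (hK : StrictMono K) {A : Set (Set ℕ)}
    (hA : ∀ a ∈ A, ∀ᶠ n in atTop, ∃ x ∈ a, x ∈ Ico (K n) (K (n + 1))) :
    Reaps (evenBlocks K) A := by
  intro a ha
  have htwo : Tendsto (fun m : ℕ => 2 * m) atTop atTop := tendsto_id.const_mul_atTop' two_pos
  have htwo_succ : Tendsto (fun m : ℕ => 2 * m + 1) atTop atTop :=
    tendsto_atTop_mono (fun m => Nat.le_succ _) htwo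
  constructor
  · refine Set.infinite_of_eventually_exists_ge (hK.tendsto_atTop.comp htwo) ?_
    filter_upwards [htwo.eventually (hA a ha)] with m ⟨x, hxa, hx⟩
    exact ⟨x, ⟨hxa, mem_iUnion.mpr ⟨m, hx⟩⟩, hx.1⟩
  · refine Set.infinite_of_eventually_exists_ge (hK.tendsto_atTop.comp htwo_succ) ?_
    filter_upwards [htwo_succ.eventually (hA a ha)] with m ⟨x, hxa, hx⟩
    exact ⟨x, ⟨hxa, notMem_evenBlocks hK hx⟩, hx.1⟩

lemma exists_reaps_of_forall_domLT_nxt {A : Set (Set ℕ)} (hinf : ∀ a ∈ A, a.Infinite)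
    {g : ℕ → ℕ} (hg : ∀ a ∈ A, domLT (nxt a) g) : ∃ d, Reaps d A := by
  obtain ⟨K, hK, hgK⟩ := exists_strictMono_lt_succ g
  refine ⟨evenBlocks K, reaps_evenBlocks hK fun a ha => ?_⟩
  filter_upwards [hK.tendsto_atTop.eventually (domLT_iff_eventually_lt.mp (hg a ha))]
    with n hn
  obtain ⟨hmem, hlt⟩ := nxt_mem_and_lt (hinf a ha) (K n)
  exact ⟨nxt a (K n), hmem, hlt.le, hn.trans (hgK n)⟩

theorem stmt4 : bNum ≤ rNum := by
  -- `sInf ∅ = 0`, so the set defining `𝔯` must be shown nonempty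
  refine le_csInf ⟨_, _, rfl, fun a ha => ha, not_reaps_setOf_infinite⟩ ?_
  rintro _ ⟨A, rfl, hinf, hA⟩
  have hunbounded : ∀ g : ℕ → ℕ, ∃ f ∈ nxt '' A, ¬ domLT f g := by
    intro g
    by_contra! hbounded
    obtain ⟨d, hd⟩ := exists_reaps_of_forall_domLT_nxt hinf
      fun a ha => hbounded _ (mem_image_of_mem nxt ha)
    exact hA d hd
  calc bNum ≤ #(nxt '' A) := csInf_le' ⟨_, rfl, hunbounded⟩
    _ ≤ #A := mk_image_le
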